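/- Let K be an N×N real symmetric positive semidefinite matrix with largest eigenvalue λ*. Let I¹ and I⁰ be nonempty subsets of {1,…,N} such that K_{I¹} and K_{I⁰} are positive definite, and assume that ε*(I) ≤ 2δ*(I) for every nonempty index set I ⊆ {1,…,N}. Then the squared maximum mean discrepancy between the empirical treatment and control distributions is bounded by (w_{I¹} − w_{I⁰})ᵀ K (w_{I¹} − w_{I⁰}) ≤ 4λ*/|I¹| + 4λ*/|I⁰| + 2 · (1/N) Σ_{m=1}^N ( V_{I¹}(m) + V_{I⁰}(m) ). -/

import Mathlib

open Matrix Finset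

variable {N : ℕ}

/-- The principal submatrix of `K` indexed by the finite index set `A`. -/
noncomputable def subK (K : Matrix (Fin N) (Fin N) ℝ) (A : Finset (Fin N)) :
    Matrix {i // i ∈ A} {i // i ∈ A} ℝ :=
  K.submatrix (fun i => (i : Fin N)) (fun j => (j : Fin N))

/-- The kernel vector `k_A(m) = (K_{i m})_{i ∈ A}`. -/
noncomputable def kvec (K : Matrix (Fin N) (Fin N) ℝ) (A : Finset (Fin N))
    (m : Fin N) : {i // i ∈ A} → ℝ :=
  fun i => K (i : Fin N) m

/-- The (noiseless Gaussian-process) posterior variance at index `m` after observing the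
indices in `A`: `V_A(m) = K_{mm} − k_A(m)ᵀ K_A⁻¹ k_A(m)`. -/
noncomputable def postVar (K : Matrix (Fin N) (Fin N) ℝ) (A : Finset (Fin N))
    (m : Fin N) : ℝ :=
  K m m - kvec K A m ⬝ᵥ ((subK K A)⁻¹ *ᵥ kvec K A m)

/-- The uniform weight vector of an index set `I`: entries `1/|I|` on `I` and `0` elsewhere. -/
noncomputable def wI (I : Finset (Fin N)) : Fin N → ℝ :=
  fun i => if i ∈ I then 1 / (I.card : ℝ) else 0

/-- `M = (1/N²) Σ_{i,j=1}^N K_{ij}`. -/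
noncomputable def Mavg (K : Matrix (Fin N) (Fin N) ℝ) : ℝ :=
  (1 / (N : ℝ) ^ 2) * ∑ i, ∑ j, K i j

/-- `δ*(I) = (1/(nN)) Σ_{i∈I} Σ_{j=1}^N K_{ij}` where `n = |I|`. -/
noncomputable def deltaStar (K : Matrix (Fin N) (Fin N) ℝ) (I : Finset (Fin N)) : ℝ :=
  (1 / ((I.card : ℝ) * N)) * ∑ i ∈ I, ∑ j, K i j

/-- `ε*(I) = M − (1/n²) Σ_{i,j∈I} K_{ij}` where `n = |I|`. -/
noncomputable def epsStar (K : Matrix (Fin N) (Fin N) ℝ) (I : Finset (Fin N)) : ℝ :=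
  Mavg K - (1 / (I.card : ℝ) ^ 2) * ∑ i ∈ I, ∑ j ∈ I, K i j

lemma quad_le_lam {N : ℕ} (K : Matrix (Fin N) (Fin N) ℝ) (hK : K.PosSemidef) (lam : ℝ)
    (hlam : IsGreatest (Set.range hK.isHermitian.eigenvalues) lam) (x : Fin N → ℝ) :
    x ⬝ᵥ K *ᵥ x ≤ lam * (x ⬝ᵥ x) := by
  have hH := hK.isHermitian
  set U : Matrix (Fin N) (Fin N) ℝ := (hH.eigenvectorUnitary : Matrix (Fin N) (Fin N) ℝ) with hU
  have hUU : U * star U = 1 := (Matrix.mem_unitaryGroup_iff).mp hH.eigenvectorUnitary.2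
  have hdiag : (Matrix.diagonal (fun i => lam - hH.eigenvalues i)).PosSemidef :=
    Matrix.PosSemidef.diagonal (fun i => sub_nonneg.mpr (hlam.2 (Set.mem_range_self i)))
  have hps : (lam • (1 : Matrix (Fin N) (Fin N) ℝ) - K).PosSemidef := by
    have : lam • (1 : Matrix (Fin N) (Fin N) ℝ) - K
        = U * Matrix.diagonal (fun i => lam - hH.eigenvalues i) * star U := by
      have hsp := hH.spectral_theorem
      have hof : (RCLike.ofReal ∘ hH.eigenvalues : Fin N → ℝ) = hH.eigenvalues := by
        funext i; simp
      simp only [Unitary.conjStarAlgAut_apply, Unitary.coe_star] at hsp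
      rw [hof, ← hU] at hsp
      have h1 : lam • (1 : Matrix (Fin N) (Fin N) ℝ)
          = U * (lam • (1 : Matrix (Fin N) (Fin N) ℝ)) * star U := by
        rw [Matrix.mul_smul, Matrix.mul_one, Matrix.smul_mul, hUU]
      have hd : Matrix.diagonal (fun i => lam - hH.eigenvalues i)
          = lam • (1 : Matrix (Fin N) (Fin N) ℝ) - Matrix.diagonal hH.eigenvalues := by
        rw [Matrix.smul_one_eq_diagonal, Matrix.diagonal_sub]
      rw [hd, Matrix.mul_sub, Matrix.sub_mul, ← hsp, ← h1]
    rw [this]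
    have := hdiag.mul_mul_conjTranspose_same U
    simpa [Matrix.star_eq_conjTranspose] using this
  have h0 := hps.dotProduct_mulVec_nonneg x
  simp only [star_trivial, Matrix.sub_mulVec, Matrix.smul_mulVec, Matrix.one_mulVec,
    dotProduct_sub, dotProduct_smul, smul_eq_mul] at h0
  linarith


lemma postVar_nonneg (K : Matrix (Fin N) (Fin N) ℝ) (hK : K.PosSemidef)
    (A : Finset (Fin N)) (hA : (subK K A).PosDef) (m : Fin N) :
    0 ≤ postVar K A m := by
  classical
  set y : {i // i ∈ A} → ℝ := (subK K A)⁻¹ *ᵥ kvec K A m with hy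
  have hinv : subK K A *ᵥ y = kvec K A m := by
    rw [hy, Matrix.mulVec_mulVec, Matrix.mul_nonsing_inv _ hA.det_pos.ne'.isUnit,
      Matrix.one_mulVec]
  set z : Fin N → ℝ := fun i => if h : i ∈ A then y ⟨i, h⟩ else 0 with hz
  have hzsum : ∀ c : Fin N → ℝ, ∑ i, z i * c i = ∑ i : {i // i ∈ A}, y i * c i := by
    intro c
    rw [← Finset.sum_subset A.subset_univ (by
      intro i _ hi
      simp [hz, dif_neg hi])]
    rw [Finset.sum_subtype A (fun _ => Iff.rfl) (fun i => z i * c i)]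
    refine Finset.sum_congr rfl fun i _ => ?_
    simp [hz, dif_pos i.2]
  have hsym : ∀ i j, K i j = K j i := fun i j => (congrFun (congrFun hK.1 i) j).symm
  have h0 := hK.dotProduct_mulVec_nonneg (Pi.single m 1 - z)
  rw [star_trivial] at h0
  have hexp : (Pi.single m 1 - z) ⬝ᵥ K *ᵥ (Pi.single m 1 - z)
      = Pi.single m 1 ⬝ᵥ K *ᵥ Pi.single m 1 - Pi.single m 1 ⬝ᵥ K *ᵥ z
        - z ⬝ᵥ K *ᵥ Pi.single m 1 + z ⬝ᵥ K *ᵥ z := by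
    simp only [Matrix.mulVec_sub, dotProduct_sub, sub_dotProduct]
    ring
  have e1 : Pi.single m 1 ⬝ᵥ K *ᵥ Pi.single m (1:ℝ) = K m m := by
    rw [single_dotProduct, Matrix.mulVec_single]
    simp
  have e2 : Pi.single m 1 ⬝ᵥ K *ᵥ z = kvec K A m ⬝ᵥ y := by
    rw [single_dotProduct, one_mul]
    show (∑ j, K m j * z j) = _
    rw [show (∑ j, K m j * z j) = ∑ j, z j * K m j by simp [mul_comm], hzsum]
    rw [dotProduct_comm]
    refine Finset.sum_congr rfl fun i _ => ?_
    rw [kvec, hsym m i]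
  have e3 : z ⬝ᵥ K *ᵥ Pi.single m 1 = kvec K A m ⬝ᵥ y := by
    show (∑ i, z i * (K *ᵥ Pi.single m 1) i) = _
    simp only [Matrix.mulVec_single, mul_one]
    rw [hzsum, dotProduct_comm]
    simp [kvec, dotProduct]
  have e4 : z ⬝ᵥ K *ᵥ z = kvec K A m ⬝ᵥ y := by
    show (∑ i, z i * (K *ᵥ z) i) = _
    rw [hzsum]
    have : ∀ i : {i // i ∈ A}, (K *ᵥ z) (i : Fin N) = (subK K A *ᵥ y) i := by
      intro i
      show (∑ j, K (i : Fin N) j * z j) = ∑ j, subK K A i j * y j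
      rw [show (∑ j, K (i:Fin N) j * z j) = ∑ j, z j * K (i:Fin N) j by simp [mul_comm], hzsum]
      refine Finset.sum_congr rfl fun j _ => ?_
      rw [subK]; simp [Matrix.submatrix_apply, mul_comm]
    calc (∑ i : {i // i ∈ A}, y i * (K *ᵥ z) (i : Fin N))
        = ∑ i : {i // i ∈ A}, y i * (subK K A *ᵥ y) i := by
          exact Finset.sum_congr rfl fun i _ => by rw [this i]
      _ = y ⬝ᵥ (subK K A *ᵥ y) := rfl
      _ = kvec K A m ⬝ᵥ y := by rw [hinv, dotProduct_comm]
  rw [hexp, e1, e2, e3, e4] at h0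
  calc (0:ℝ) ≤ K m m - kvec K A m ⬝ᵥ y - kvec K A m ⬝ᵥ y + kvec K A m ⬝ᵥ y := h0
    _ = postVar K A m := by rw [postVar]; ring


noncomputable def uvec (N : ℕ) : Fin N → ℝ := fun _ => 1 / (N : ℝ)

lemma wI_sum (I : Finset (Fin N)) (c : Fin N → ℝ) :
    ∑ i, wI I i * c i = (1 / (I.card : ℝ)) * ∑ i ∈ I, c i := by
  rw [Finset.mul_sum]
  rw [← Finset.sum_subset I.subset_univ (by intro i _ hi; simp [wI, if_neg hi])]
  exact Finset.sum_congr rfl fun i hi => by rw [wI, if_pos hi]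

lemma quad_symm (K : Matrix (Fin N) (Fin N) ℝ) (hsym : ∀ i j, K i j = K j i)
    (v w : Fin N → ℝ) : v ⬝ᵥ K *ᵥ w = w ⬝ᵥ K *ᵥ v := by
  show (∑ i, v i * ∑ j, K i j * w j) = ∑ j, w j * ∑ i, K j i * v i
  simp only [Finset.mul_sum]
  rw [Finset.sum_comm]
  exact Finset.sum_congr rfl fun j _ => Finset.sum_congr rfl fun i _ => by
    rw [hsym j i]; ring

lemma key_bound (K : Matrix (Fin N) (Fin N) ℝ) (hK : K.PosSemidef) (lam : ℝ)
    (hlam : ∀ x : Fin N → ℝ, x ⬝ᵥ K *ᵥ x ≤ lam * (x ⬝ᵥ x))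
    (I : Finset (Fin N)) (hI : I.Nonempty) (hN : 0 < N)
    (hass : epsStar K I ≤ 2 * deltaStar K I) :
    (wI I - uvec N) ⬝ᵥ K *ᵥ (wI I - uvec N) ≤ 2 * lam / (I.card : ℝ) := by
  have hn : (0:ℝ) < (I.card : ℝ) := by exact_mod_cast hI.card_pos
  have hNr : (0:ℝ) < (N : ℝ) := by exact_mod_cast hN
  have hq : wI I ⬝ᵥ K *ᵥ wI I = (1 / (I.card : ℝ) ^ 2) * ∑ i ∈ I, ∑ j ∈ I, K i j := by
    show (∑ i, wI I i * (K *ᵥ wI I) i) = _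
    rw [wI_sum]
    have : ∀ i, (K *ᵥ wI I) i = (1 / (I.card : ℝ)) * ∑ j ∈ I, K i j := by
      intro i
      show (∑ j, K i j * wI I j) = _
      rw [show (∑ j, K i j * wI I j) = ∑ j, wI I j * K i j by simp [mul_comm], wI_sum]
    simp only [this, ← Finset.mul_sum]
    ring
  have hδ : wI I ⬝ᵥ K *ᵥ uvec N = deltaStar K I := by
    show (∑ i, wI I i * (K *ᵥ uvec N) i) = _
    rw [wI_sum]
    have : ∀ i, (K *ᵥ uvec N) i = (1 / (N : ℝ)) * ∑ j, K i j := by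
      intro i
      show (∑ j, K i j * (1 / (N:ℝ))) = _
      rw [Finset.mul_sum]
      exact Finset.sum_congr rfl fun j _ => mul_comm _ _
    simp only [this, ← Finset.mul_sum, deltaStar]
    field_simp
  have hsym : ∀ i j, K i j = K j i := fun i j => (congrFun (congrFun hK.1 i) j).symm
  have hδ' : uvec N ⬝ᵥ K *ᵥ wI I = deltaStar K I := by
    rw [quad_symm K hsym, hδ]
  have hM : uvec N ⬝ᵥ K *ᵥ uvec N = Mavg K := by
    show (∑ i, (1/(N:ℝ)) * ∑ j, K i j * (1/(N:ℝ))) = _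
    rw [Mavg, Finset.mul_sum]
    refine Finset.sum_congr rfl fun i _ => ?_
    rw [Finset.mul_sum, Finset.mul_sum]
    refine Finset.sum_congr rfl fun j _ => by ring
  have hww : wI I ⬝ᵥ wI I = 1 / (I.card : ℝ) := by
    show (∑ i, wI I i * wI I i) = _
    rw [wI_sum]
    have h1 : ∑ i ∈ I, wI I i = 1 := by
      have : ∑ i ∈ I, wI I i = ∑ i ∈ I, 1/(I.card:ℝ) :=
        Finset.sum_congr rfl fun i hi => by rw [wI, if_pos hi]
      rw [this, Finset.sum_const, nsmul_eq_mul]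
      field_simp
    rw [h1, mul_one]
  have hexp : (wI I - uvec N) ⬝ᵥ K *ᵥ (wI I - uvec N)
      = wI I ⬝ᵥ K *ᵥ wI I - wI I ⬝ᵥ K *ᵥ uvec N - uvec N ⬝ᵥ K *ᵥ wI I
        + uvec N ⬝ᵥ K *ᵥ uvec N := by
    simp only [Matrix.mulVec_sub, dotProduct_sub, sub_dotProduct]
    ring
  have heps : epsStar K I = Mavg K - wI I ⬝ᵥ K *ᵥ wI I := by rw [epsStar, hq]
  have h2q : wI I ⬝ᵥ K *ᵥ wI I ≤ lam / (I.card:ℝ) := by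
    have := hlam (wI I)
    rw [hww] at this
    calc wI I ⬝ᵥ K *ᵥ wI I ≤ lam * (1/(I.card:ℝ)) := this
      _ = lam / (I.card:ℝ) := by ring
  have : (wI I - uvec N) ⬝ᵥ K *ᵥ (wI I - uvec N) ≤ 2 * (wI I ⬝ᵥ K *ᵥ wI I) := by
    rw [hexp, hδ, hδ', hM]
    linarith [heps]
  have hr : 2 * lam / (I.card:ℝ) = 2 * (lam / (I.card:ℝ)) := by ring
  rw [hr]
  linarith [h2q, this]


/-- Theorem 4.5, noiseless case: for a symmetric PSD Gram matrix `K` with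
largest eigenvalue `λ*`, nonempty treatment/control index sets `I¹, I⁰` whose principal
submatrices are positive definite, and assuming `ε*(I) ≤ 2δ*(I)` for every nonempty `I`,
the squared MMD between the two empirical groups is bounded by
`4λ*/|I¹| + 4λ*/|I⁰| + 2·(1/N) Σ_m (V_{I¹}(m) + V_{I⁰}(m))`. -/
theorem mmd_treatment_control_le (K : Matrix (Fin N) (Fin N) ℝ)
    (hK : K.PosSemidef) (lam : ℝ)
    (hlam : IsGreatest (Set.range hK.isHermitian.eigenvalues) lam)
    (I1 I0 : Finset (Fin N)) (hI1 : I1.Nonempty) (hI0 : I0.Nonempty)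
    (hK1 : (subK K I1).PosDef) (hK0 : (subK K I0).PosDef)
    (hassum : ∀ I : Finset (Fin N), I.Nonempty → epsStar K I ≤ 2 * deltaStar K I) :
    (wI I1 - wI I0) ⬝ᵥ (K *ᵥ (wI I1 - wI I0)) ≤
      4 * lam / (I1.card : ℝ) + 4 * lam / (I0.card : ℝ) +
        2 * ((1 / (N : ℝ)) * ∑ m, (postVar K I1 m + postVar K I0 m)) := by
  have hN : 0 < N := hI1.choose.pos
  have hlam' : ∀ x : Fin N → ℝ, x ⬝ᵥ K *ᵥ x ≤ lam * (x ⬝ᵥ x) := quad_le_lam K hK lam hlam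
  have h1 := key_bound K hK lam hlam' I1 hI1 hN (hassum I1 hI1)
  have h0 := key_bound K hK lam hlam' I0 hI0 hN (hassum I0 hI0)
  have hpar : (wI I1 - wI I0) ⬝ᵥ K *ᵥ (wI I1 - wI I0) ≤
      2 * ((wI I1 - uvec N) ⬝ᵥ K *ᵥ (wI I1 - uvec N)) +
        2 * ((wI I0 - uvec N) ⬝ᵥ K *ᵥ (wI I0 - uvec N)) := by
    set a := wI I1 - uvec N with ha
    set b := wI I0 - uvec N with hb
    have hab : wI I1 - wI I0 = a - b := (sub_sub_sub_cancel_right _ _ _).symm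
    rw [hab]
    have hplus := hK.dotProduct_mulVec_nonneg (a + b)
    rw [star_trivial] at hplus
    have hexp : (a - b) ⬝ᵥ K *ᵥ (a - b) + (a + b) ⬝ᵥ K *ᵥ (a + b)
        = 2 * (a ⬝ᵥ K *ᵥ a) + 2 * (b ⬝ᵥ K *ᵥ b) := by
      simp only [Matrix.mulVec_sub, Matrix.mulVec_add, dotProduct_sub,
        dotProduct_add, sub_dotProduct, add_dotProduct]
      ring
    linarith
  have hV : 0 ≤ 2 * ((1 / (N : ℝ)) * ∑ m, (postVar K I1 m + postVar K I0 m)) := by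
    have hterm : ∀ m, 0 ≤ postVar K I1 m + postVar K I0 m := fun m =>
      add_nonneg (postVar_nonneg K hK I1 hK1 m) (postVar_nonneg K hK I0 hK0 m)
    have hsum : 0 ≤ ∑ m, (postVar K I1 m + postVar K I0 m) :=
      Finset.sum_nonneg fun m _ => hterm m
    have : (0:ℝ) ≤ 1 / (N:ℝ) := by positivity
    nlinarith
  have e1 : 4 * lam / (I1.card : ℝ) = 2 * (2 * lam / (I1.card : ℝ)) := by ring
  have e0 : 4 * lam / (I0.card : ℝ) = 2 * (2 * lam / (I0.card : ℝ)) := by ring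
  linarith
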